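/- Convergence of JacSketch for minibatch sketches with τ-partition samplings (stochastic Lyapunov function). Let G be a partition of [n] := {1,…,n} into sets each of cardinality τ ≥ 1, and let p_C > 0 for C ∈ G with ∑_{C∈G} p_C = 1. Let f_1,…,f_n : ℝ^d → ℝ be differentiable, f := (1/n)∑_i f_i, f_C := (1/τ)∑_{i∈C} f_i, and let x* ∈ ℝ^d satisfy ∑_i ∇f_i(x*) = 0. Let μ > 0 and L_C ≥ μ for each C ∈ G, and assume for every C ∈ G and all x, y ∈ ℝ^d: ⟨∇f_C(x) − ∇f_C(y), x − y⟩ ≥ (μ L_C/(μ + L_C))‖x − y‖² + (1/(μ + L_C))‖∇f_C(x) − ∇f_C(y)‖² (this holds when f_C is μ-strongly convex and L_C-smooth). For J ∈ ℝ^{d×n} with columns J_{:i} and C ∈ G define h_C(J) := (1/(n p_C)) ∑_{i∈C} (J_{:i} − ∇f_i(x*)), σ_C := n/(4τL_C), and the stochastic Lyapunov function Ψ_C(x, J) := ‖x − x*‖² + 2σ_C α ‖h_C(J)‖². For C' ∈ G define the update T_{C'}(x, J) := (x − α g_{C'}(x,J), J'(C')), where g_{C'}(x, J) := (1/n)∑_{i=1}^n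 J_{:i} + (1/(n p_{C'})) ∑_{i∈C'} (∇f_i(x) − J_{:i}) and J'(C') has columns ∇f_i(x) for i ∈ C' and J_{:i} for i ∉ C'. Suppose 0 < α ≤ min_{C∈G} p_C/(μ + 4 L_C τ/n). Then for any initial (x⁰, J⁰) and every k ≥ 0, the expectation over i.i.d. samples—i.e., the sum over all sequences (C'_0,…,C'_{k−1}) ∈ G^k with weights ∏_t p_{C'_t} of ∑_{C∈G} p_C Ψ_C evaluated at the iterates (x^k, J^k) obtained by applying T_{C'_0},…,T_{C'_{k−1}} successively—satisfies E[∑_{C∈G} p_C Ψ_C(x^k, J^k)] ≤ (1 − μα)^k · ∑_{C∈G} p_C Ψ_C(x⁰, J⁰). -/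
import Mathlib


open Matrix

/-- The (Euclidean) gradient of `f : ℝ^d → ℝ` at `x`. -/
noncomputable def grad {d : ℕ} (f : (Fin d → ℝ) → ℝ) (x : Fin d → ℝ) : Fin d → ℝ :=
  fun k => fderiv ℝ f x (Pi.single k 1)

/-- Squared Euclidean norm. -/
def sq2 {d : ℕ} (v : Fin d → ℝ) : ℝ := ∑ k, (v k) ^ 2

/-- Euclidean inner product. -/
def inner2 {d : ℕ} (v w : Fin d → ℝ) : ℝ := ∑ k, v k * w k

section JacSketchAux

variable {d : ℕ}

lemma inner2_comm (v w : Fin d → ℝ) : inner2 v w = inner2 w v := by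
  simp [inner2, mul_comm]

lemma sq2_eq (v : Fin d → ℝ) : sq2 v = inner2 v v := by simp [sq2, inner2, sq]

lemma sq2_nonneg (v : Fin d → ℝ) : 0 ≤ sq2 v :=
  Finset.sum_nonneg fun _ _ => sq_nonneg _

lemma inner2_add_right (u v w : Fin d → ℝ) :
    inner2 u (v + w) = inner2 u v + inner2 u w := by
  simp [inner2, mul_add, Finset.sum_add_distrib]

lemma inner2_sub_right (u v w : Fin d → ℝ) :
    inner2 u (v - w) = inner2 u v - inner2 u w := by
  simp [inner2, mul_sub, Finset.sum_sub_distrib]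

lemma inner2_smul_right (a : ℝ) (u w : Fin d → ℝ) :
    inner2 u (a • w) = a * inner2 u w := by
  simp only [inner2, Pi.smul_apply, smul_eq_mul, Finset.mul_sum]
  exact Finset.sum_congr rfl fun k _ => by ring

lemma inner2_sum_right {ι : Type*} (s : Finset ι) (F : ι → Fin d → ℝ) (u : Fin d → ℝ) :
    inner2 u (∑ i ∈ s, F i) = ∑ i ∈ s, inner2 u (F i) := by
  simp only [inner2, Finset.sum_apply, Finset.mul_sum]
  exact Finset.sum_comm

lemma sq2_smul (a : ℝ) (v : Fin d → ℝ) : sq2 (a • v) = a ^ 2 * sq2 v := by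
  simp only [sq2, Pi.smul_apply, smul_eq_mul, Finset.mul_sum]
  exact Finset.sum_congr rfl fun k _ => by ring

lemma sq2_sub_smul (u v : Fin d → ℝ) (a : ℝ) :
    sq2 (u - a • v) = sq2 u - 2 * a * inner2 u v + a ^ 2 * sq2 v := by
  simp only [sq2, inner2, Pi.sub_apply, Pi.smul_apply, smul_eq_mul, Finset.mul_sum,
    ← Finset.sum_sub_distrib, ← Finset.sum_add_distrib]
  exact Finset.sum_congr rfl fun k _ => by ring

lemma sq2_sub (u v : Fin d → ℝ) :
    sq2 (u - v) = sq2 u - 2 * inner2 u v + sq2 v := by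
  simp only [sq2, inner2, Pi.sub_apply, Finset.mul_sum,
    ← Finset.sum_sub_distrib, ← Finset.sum_add_distrib]
  exact Finset.sum_congr rfl fun k _ => by ring

lemma sq2_add_le (u v : Fin d → ℝ) : sq2 (u + v) ≤ 2 * sq2 u + 2 * sq2 v := by
  have h : ∀ k ∈ Finset.univ, ((u + v) k) ^ 2 ≤ 2 * (u k) ^ 2 + 2 * (v k) ^ 2 := by
    intro k _
    simp only [Pi.add_apply]
    nlinarith [sq_nonneg (u k - v k)]
  calc sq2 (u + v) ≤ ∑ k, (2 * (u k) ^ 2 + 2 * (v k) ^ 2) := Finset.sum_le_sum h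
    _ = 2 * sq2 u + 2 * sq2 v := by
        rw [Finset.sum_add_distrib, ← Finset.mul_sum, ← Finset.mul_sum]; rfl

lemma grad_const_mul_sum {n : ℕ} (f : Fin n → (Fin d → ℝ) → ℝ)
    (hdiff : ∀ i, Differentiable ℝ (f i)) (c : ℝ) (C : Finset (Fin n)) (y : Fin d → ℝ) :
    grad (fun z => c * ∑ i ∈ C, f i z) y = c • ∑ i ∈ C, grad (f i) y := by
  funext k
  simp only [grad]
  rw [fderiv_const_mul (by exact DifferentiableAt.fun_sum fun i _ => (hdiff i).differentiableAt) c]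
  rw [fderiv_fun_sum (fun i _ => (hdiff i).differentiableAt)]
  simp only [ContinuousLinearMap.coe_smul', Pi.smul_apply, ContinuousLinearMap.sum_apply,
    smul_eq_mul, Finset.sum_apply]
  rfl

lemma part_disj {n : ℕ} {G : Finset (Finset (Fin n))}
    (hpart : ∀ i : Fin n, ∃! C, C ∈ G ∧ i ∈ C) :
    ∀ C ∈ G, ∀ C' ∈ G, C ≠ C' → ∀ i ∈ C, i ∉ C' := by
  intro C hC C' hC' hne i hiC hiC'
  obtain ⟨B, _, hB⟩ := hpart i
  exact hne ((hB C ⟨hC, hiC⟩).trans (hB C' ⟨hC', hiC'⟩).symm)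

lemma sum_partition {n : ℕ} {G : Finset (Finset (Fin n))}
    (hpart : ∀ i : Fin n, ∃! C, C ∈ G ∧ i ∈ C)
    {M : Type*} [AddCommMonoid M] (F : Fin n → M) :
    ∑ i, F i = ∑ C ∈ G, ∑ i ∈ C, F i := by
  have hdisj : (G : Set (Finset (Fin n))).PairwiseDisjoint id := by
    intro C hC C' hC' hne
    simp only [Function.onFun, id]
    rw [Finset.disjoint_left]
    intro i hiC hiC'
    exact part_disj hpart C hC C' hC' hne i hiC hiC'
  have huniv : G.biUnion id = Finset.univ := by
    ext i
    simp only [Finset.mem_biUnion, id, Finset.mem_univ, iff_true]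
    obtain ⟨C, ⟨hC, hi⟩, _⟩ := hpart i
    exact ⟨C, hC, hi⟩
  rw [← huniv, Finset.sum_biUnion hdisj]
  rfl

lemma card_partition {n : ℕ} {τ : ℕ} {G : Finset (Finset (Fin n))}
    (hcard : ∀ C ∈ G, C.card = τ)
    (hpart : ∀ i : Fin n, ∃! C, C ∈ G ∧ i ∈ C) :
    ∑ _C ∈ G, (τ : ℝ) = (n : ℝ) := by
  have h := sum_partition hpart (fun _ : Fin n => (1 : ℝ))
  simp only [Finset.sum_const, nsmul_eq_mul, mul_one, Finset.card_univ, Fintype.card_fin] at h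
  rw [h]
  exact Finset.sum_congr rfl fun C hC => by rw [hcard C hC]

lemma perC_key (μ L p s c e α nr τr xq dq hq ip : ℝ)
    (hμ : 0 < μ) (hLμ : μ ≤ L) (hp : 0 < p) (hα : 0 < α)
    (hn : 0 < nr) (hspos : 0 < s) (hcpos : 0 < c)
    (hs : s * (4*τr*L) = nr) (hc : c * (nr*p) = τr) (he : e * (μ + L) = 1)
    (hxq : 0 ≤ xq) (hdq : 0 ≤ dq) (hhq : 0 ≤ hq)
    (hstep : α * (nr*μ + 4*L*τr) ≤ nr*p)
    (hip : μ*L*e*xq + e*dq ≤ ip) :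
    -(2*α*((p*c) * ip)) + α^2*(p*(2*(c^2*dq) + 2*hq))
      + (2*α*(p^2*s*(c^2*dq)) - 2*α*(p^2*s*hq))
      ≤ -(μ*α*((p*c) * xq)) - 2*μ*α^2*(p*s*hq) := by
  have hL0 : 0 < L := lt_of_lt_of_le hμ hLμ
  have hML : 0 < μ + L := by linarith
  have hepos : 0 < e := by
    by_contra hcon
    push_neg at hcon
    nlinarith [mul_nonpos_of_nonpos_of_nonneg hcon hML.le]
  have h4 : α*(s*(4*τr*L)) = α*nr := by rw [hs]
  have h5 := mul_le_mul_of_nonneg_right hstep hspos.le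
  have key1 : α + μ*α*s ≤ p*s := by
    have h6 : nr*(α + μ*α*s) ≤ nr*(p*s) := by linarith [h4, h5]
    exact le_of_mul_le_mul_left h6 hn
  have hqpart : α^2*(p*(2*hq)) + 2*μ*α^2*(p*s*hq) - 2*α*(p^2*s*hq) ≤ 0 := by
    have h7 : 0 ≤ (p*s - (α + μ*α*s)) * (2*α*p*hq) :=
      mul_nonneg (by linarith) (by positivity)
    linarith [h7]
  have h9 : α*(4*L*τr) ≤ nr*p := by
    have h0 : 0 ≤ α*(nr*μ) := by positivity
    linarith [hstep, h0]
  have h8 : 4*L*(α*c) ≤ 1 := by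
    have hc2 : (4*L*α)*(c*(nr*p)) = (4*L*α)*τr := by rw [hc]
    have h10 : (4*L*(α*c))*(nr*p) ≤ 1*(nr*p) := by linarith [hc2, h9]
    exact le_of_mul_le_mul_right h10 (by positivity)
  have h11 : (4*L*(p*s*c))*nr = 1*nr := by linear_combination (4*L*s)*hc + hs
  have h12 : 4*L*(p*s*c) = 1 := mul_right_cancel₀ hn.ne' h11
  have h13 : (μ+L)*(α*c + p*s*c) ≤ 1 := by
    have hint : 0 ≤ (L - μ) * (α*c + p*s*c) :=
      mul_nonneg (by linarith) (by positivity)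
    linarith [h8, h12, hint]
  have h14 : α*c + p*s*c ≤ e := by
    have h15 : (α*c + p*s*c)*(μ+L) ≤ e*(μ+L) := by rw [he]; linarith [h13]
    exact le_of_mul_le_mul_right h15 hML
  have h16 := mul_le_mul_of_nonneg_left h14 (show (0:ℝ) ≤ 2*α*(p*c)*dq by positivity)
  have h17 := mul_le_mul_of_nonneg_left hip (show (0:ℝ) ≤ 2*α*(p*c) by positivity)
  have h18 : 1 ≤ 2*L*e := by nlinarith [he, hepos, hLμ]
  have hw : 0 ≤ μ*α*((p*c)*xq) := by positivity
  have h19 := mul_le_mul_of_nonneg_left h18 hw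
  linarith [h16, h17, h19, hqpart]

end JacSketchAux

/-- Convergence of JacSketch for minibatch sketches with `τ`-partition samplings,
via the stochastic Lyapunov function `Ψ_C(x,J) = ‖x − x*‖² + 2σ_C α ‖h_C(J)‖²`. -/
theorem jacsketch_convergence_partition_stochastic_lyapunov
    {d n : ℕ} (hn : 0 < n) (τ : ℕ) (hτ : 1 ≤ τ)
    (G : Finset (Finset (Fin n)))
    (hcard : ∀ C ∈ G, C.card = τ)
    (hpart : ∀ i : Fin n, ∃! C, C ∈ G ∧ i ∈ C)
    (p : Finset (Fin n) → ℝ) (hp : ∀ C ∈ G, 0 < p C) (hp1 : ∑ C ∈ G, p C = 1)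
    (f : Fin n → (Fin d → ℝ) → ℝ) (hdiff : ∀ i, Differentiable ℝ (f i))
    (fbar : (Fin d → ℝ) → ℝ) (hfbar : ∀ x, fbar x = (1 / (n : ℝ)) * ∑ i, f i x)
    (fC : Finset (Fin n) → (Fin d → ℝ) → ℝ)
    (hfC : ∀ C x, fC C x = (1 / (τ : ℝ)) * ∑ i ∈ C, f i x)
    (xs : Fin d → ℝ) (hcrit : ∑ i, grad (f i) xs = 0)
    (μ : ℝ) (hμ : 0 < μ)
    (L : Finset (Fin n) → ℝ) (hL : ∀ C ∈ G, μ ≤ L C)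
    (hcoerce : ∀ C ∈ G, ∀ x y : Fin d → ℝ,
      inner2 (grad (fC C) x - grad (fC C) y) (x - y)
        ≥ μ * L C / (μ + L C) * sq2 (x - y)
          + (1 / (μ + L C)) * sq2 (grad (fC C) x - grad (fC C) y))
    (h : Finset (Fin n) → Matrix (Fin d) (Fin n) ℝ → (Fin d → ℝ))
    (hh : ∀ (C : Finset (Fin n)) (J : Matrix (Fin d) (Fin n) ℝ),
      h C J = (1 / ((n : ℝ) * p C)) • ∑ i ∈ C, ((fun k => J k i) - grad (f i) xs))
    (σ : Finset (Fin n) → ℝ) (hσ : ∀ C, σ C = (n : ℝ) / (4 * (τ : ℝ) * L C))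
    (Ψ : Finset (Fin n) → (Fin d → ℝ) × Matrix (Fin d) (Fin n) ℝ → ℝ)
    (α : ℝ) (hα0 : 0 < α)
    (hα : ∀ C ∈ G, α ≤ p C / (μ + 4 * L C * (τ : ℝ) / (n : ℝ)))
    (hΨ : ∀ (C : Finset (Fin n)) (x : Fin d → ℝ) (J : Matrix (Fin d) (Fin n) ℝ),
      Ψ C (x, J) = sq2 (x - xs) + 2 * σ C * α * sq2 (h C J))
    (g : Finset (Fin n) → (Fin d → ℝ) × Matrix (Fin d) (Fin n) ℝ → (Fin d → ℝ))
    (hg : ∀ (C' : Finset (Fin n)) (x : Fin d → ℝ) (J : Matrix (Fin d) (Fin n) ℝ),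
      g C' (x, J) = (1 / (n : ℝ)) • (∑ i : Fin n, (fun k => J k i))
        + (1 / ((n : ℝ) * p C')) • ∑ i ∈ C', (grad (f i) x - (fun k => J k i)))
    (T : Finset (Fin n) → (Fin d → ℝ) × Matrix (Fin d) (Fin n) ℝ →
        (Fin d → ℝ) × Matrix (Fin d) (Fin n) ℝ)
    (hT : ∀ (C' : Finset (Fin n)) (x : Fin d → ℝ) (J : Matrix (Fin d) (Fin n) ℝ),
      T C' (x, J) = (x - α • g C' (x, J),
        Matrix.of fun k i => if i ∈ C' then grad (f i) x k else J k i))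
    (x0 : Fin d → ℝ) (J0 : Matrix (Fin d) (Fin n) ℝ) :
    ∀ k : ℕ,
      ∑ cs : Fin k → {C // C ∈ G}, (∏ t, p ((cs t) : Finset (Fin n))) *
          (∑ C ∈ G, p C * Ψ C ((List.ofFn cs).foldl (fun s C' => T (C' : Finset (Fin n)) s) (x0, J0)))
        ≤ (1 - μ * α) ^ k * ∑ C ∈ G, p C * Ψ C (x0, J0) := by
  have hn' : (0:ℝ) < n := by exact_mod_cast hn
  have hτ' : (0:ℝ) < (τ:ℝ) := by exact_mod_cast hτ
  have hL0 : ∀ C ∈ G, 0 < L C := fun C hC => lt_of_lt_of_le hμ (hL C hC)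
  have hσpos : ∀ C ∈ G, 0 < σ C := by
    intro C hC
    have := hL0 C hC
    rw [hσ]
    positivity
  have hdisjG := part_disj hpart
  have hgC : ∀ (C : Finset (Fin n)) (y : Fin d → ℝ),
      grad (fC C) y = (1/(τ:ℝ)) • ∑ i ∈ C, grad (f i) y := by
    intro C y
    have hfCeq : fC C = fun z => (1/(τ:ℝ)) * ∑ i ∈ C, f i z := funext fun z => hfC C z
    rw [hfCeq]
    exact grad_const_mul_sum f hdiff _ C y
  have hpc : ∀ C ∈ G, p C * ((τ:ℝ)/((n:ℝ)*p C)) = (τ:ℝ)/(n:ℝ) := by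
    intro C hC
    have h1 := (hp C hC).ne'
    field_simp
  have hpc1 : ∑ C ∈ G, p C * ((τ:ℝ)/((n:ℝ)*p C)) = 1 := by
    rw [Finset.sum_congr rfl hpc, ← Finset.sum_div, card_partition hcard hpart,
      div_self hn'.ne']
  -- one-step inequality
  have step : ∀ s : (Fin d → ℝ) × Matrix (Fin d) (Fin n) ℝ,
      ∑ C' ∈ G, p C' * (∑ C ∈ G, p C * Ψ C (T C' s)) ≤ (1 - μ*α) * ∑ C ∈ G, p C * Ψ C s := by
    rintro ⟨x, J⟩
    have hAD : ∀ C ∈ G,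
        (1/((n:ℝ)*p C)) • ∑ i ∈ C, (grad (f i) x - grad (f i) xs)
          = ((τ:ℝ)/((n:ℝ)*p C)) • (grad (fC C) x - grad (fC C) xs) := by
      intro C hC
      rw [hgC C x, hgC C xs, ← smul_sub, ← Finset.sum_sub_distrib, smul_smul]
      congr 1
      have h1 := (hp C hC).ne'
      field_simp
    have hBeq : (∑ C ∈ G, p C • h C J) = (1/(n:ℝ)) • ∑ i : Fin n, (fun k => J k i) := by
      have e1 : ∀ C ∈ G, p C • h C J
          = (1/(n:ℝ)) • ∑ i ∈ C, ((fun k => J k i) - grad (f i) xs) := by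
        intro C hC
        rw [hh, smul_smul]
        congr 1
        have h1 := (hp C hC).ne'
        field_simp
      rw [Finset.sum_congr rfl e1, ← Finset.smul_sum, ← sum_partition hpart,
        Finset.sum_sub_distrib, hcrit, sub_zero]
    have hAH : ∀ C' ∈ G,
        (1/((n:ℝ)*p C')) • ∑ i ∈ C', (grad (f i) x - grad (f i) xs) - h C' J
          = (1/((n:ℝ)*p C')) • ∑ i ∈ C', (grad (f i) x - (fun k => J k i)) := by
      intro C' hC'
      rw [hh, ← smul_sub, ← Finset.sum_sub_distrib]
      congr 1
      exact Finset.sum_congr rfl fun i _ => by abel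
    have hgdec : ∀ C' ∈ G, g C' (x, J)
        = (∑ C ∈ G, p C • h C J)
          + ((1/((n:ℝ)*p C')) • ∑ i ∈ C', (grad (f i) x - grad (f i) xs) - h C' J) := by
      intro C' hC'
      rw [hg, hBeq, hAH C' hC']
    have hupd : ∀ C' ∈ G, ∀ C ∈ G,
        h C (Matrix.of fun k i => if i ∈ C' then grad (f i) x k else J k i)
          = if C = C' then (1/((n:ℝ)*p C)) • ∑ i ∈ C, (grad (f i) x - grad (f i) xs)
            else h C J := by
      intro C' hC' C hC
      by_cases hcc : C = C'
      · subst hcc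
        rw [if_pos rfl, hh]
        congr 1
        refine Finset.sum_congr rfl fun i hi => ?_
        funext k
        simp only [Matrix.of_apply, Pi.sub_apply]
        rw [if_pos hi]
      · rw [if_neg hcc, hh, hh]
        congr 1
        refine Finset.sum_congr rfl fun i hi => ?_
        funext k
        simp only [Matrix.of_apply, Pi.sub_apply]
        rw [if_neg (hdisjG C hC C' hC' hcc i hi)]
    have hBip : ∀ w : Fin d → ℝ,
        ∑ C ∈ G, p C * inner2 w (h C J) = inner2 w (∑ C ∈ G, p C • h C J) := by
      intro w
      rw [inner2_sum_right]
      exact Finset.sum_congr rfl fun C _ => by rw [inner2_smul_right]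
    have hipsum : ∑ C' ∈ G, p C' * inner2 (x - xs) (g C' (x, J))
        = ∑ C ∈ G, (p C * ((τ:ℝ)/((n:ℝ)*p C)))
            * inner2 (x - xs) (grad (fC C) x - grad (fC C) xs) := by
      have e1 : ∀ C' ∈ G, p C' * inner2 (x - xs) (g C' (x, J))
          = p C' * inner2 (x - xs) (∑ C ∈ G, p C • h C J)
            + (p C' * ((τ:ℝ)/((n:ℝ)*p C')))
              * inner2 (x - xs) (grad (fC C') x - grad (fC C') xs)
            - p C' * inner2 (x - xs) (h C' J) := by
        intro C' hC'
        rw [hgdec C' hC', inner2_add_right, inner2_sub_right, hAD C' hC', inner2_smul_right]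
        ring
      rw [Finset.sum_congr rfl e1, Finset.sum_sub_distrib, Finset.sum_add_distrib,
        ← Finset.sum_mul, hp1, one_mul, hBip (x - xs)]
      ring
    have hvar : ∑ C ∈ G, p C * sq2 ((∑ C' ∈ G, p C' • h C' J) - h C J)
        = ∑ C ∈ G, p C * sq2 (h C J) - sq2 (∑ C' ∈ G, p C' • h C' J) := by
      have e1 : ∀ C ∈ G, p C * sq2 ((∑ C' ∈ G, p C' • h C' J) - h C J)
          = p C * sq2 (∑ C' ∈ G, p C' • h C' J)
            - 2 * (p C * inner2 (∑ C' ∈ G, p C' • h C' J) (h C J)) + p C * sq2 (h C J) := by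
        intro C _
        rw [sq2_sub]
        ring
      rw [Finset.sum_congr rfl e1, Finset.sum_add_distrib, Finset.sum_sub_distrib,
        ← Finset.sum_mul, hp1, one_mul, ← Finset.mul_sum,
        hBip (∑ C' ∈ G, p C' • h C' J), ← sq2_eq]
      ring
    have hSg : ∑ C' ∈ G, p C' * sq2 (g C' (x, J))
        ≤ ∑ C ∈ G, p C * (2*((((τ:ℝ)/((n:ℝ)*p C))^2)
              * sq2 (grad (fC C) x - grad (fC C) xs)) + 2*sq2 (h C J)) := by
      have e1 : ∀ C' ∈ G, p C' * sq2 (g C' (x, J))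
          ≤ p C' * (2*((((τ:ℝ)/((n:ℝ)*p C'))^2) * sq2 (grad (fC C') x - grad (fC C') xs)))
            + 2*(p C' * sq2 ((∑ C ∈ G, p C • h C J) - h C' J)) := by
        intro C' hC'
        have hg2 : g C' (x, J)
            = ((1/((n:ℝ)*p C')) • ∑ i ∈ C', (grad (f i) x - grad (f i) xs))
              + ((∑ C ∈ G, p C • h C J) - h C' J) := by
          rw [hgdec C' hC']
          abel
        have h1 : sq2 (g C' (x, J))
            ≤ 2*((((τ:ℝ)/((n:ℝ)*p C'))^2) * sq2 (grad (fC C') x - grad (fC C') xs))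
              + 2*sq2 ((∑ C ∈ G, p C • h C J) - h C' J) := by
          rw [hg2, hAD C' hC']
          calc sq2 _
              ≤ 2*sq2 (((τ:ℝ)/((n:ℝ)*p C')) • (grad (fC C') x - grad (fC C') xs))
                + 2*sq2 ((∑ C ∈ G, p C • h C J) - h C' J) := sq2_add_le _ _
            _ = _ := by rw [sq2_smul]
        have h2 := mul_le_mul_of_nonneg_left h1 (hp C' hC').le
        linarith [h2]
      calc ∑ C' ∈ G, p C' * sq2 (g C' (x, J))
          ≤ ∑ C' ∈ G, (p C' * (2*((((τ:ℝ)/((n:ℝ)*p C'))^2)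
                * sq2 (grad (fC C') x - grad (fC C') xs)))
              + 2*(p C' * sq2 ((∑ C ∈ G, p C • h C J) - h C' J))) := Finset.sum_le_sum e1
        _ = ∑ C' ∈ G, p C' * (2*((((τ:ℝ)/((n:ℝ)*p C'))^2)
                * sq2 (grad (fC C') x - grad (fC C') xs)))
              + 2*(∑ C' ∈ G, p C' * sq2 ((∑ C ∈ G, p C • h C J) - h C' J)) := by
            rw [Finset.sum_add_distrib, ← Finset.mul_sum]
        _ ≤ _ := by
            rw [hvar]
            have h3 := sq2_nonneg (∑ C' ∈ G, p C' • h C' J)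
            have e2 : ∑ C ∈ G, p C * (2*((((τ:ℝ)/((n:ℝ)*p C))^2)
                  * sq2 (grad (fC C) x - grad (fC C) xs)) + 2*sq2 (h C J))
                = ∑ C ∈ G, p C * (2*((((τ:ℝ)/((n:ℝ)*p C))^2)
                    * sq2 (grad (fC C) x - grad (fC C) xs)))
                  + 2*(∑ C ∈ G, p C * sq2 (h C J)) := by
              rw [Finset.mul_sum, ← Finset.sum_add_distrib]
              exact Finset.sum_congr rfl fun C _ => by ring
            rw [e2]
            linarith [h3]
    have hΦT : ∀ C' ∈ G, ∑ C ∈ G, p C * Ψ C (T C' (x, J))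
        = sq2 ((x - xs) - α • g C' (x, J))
          + 2*α*((∑ C ∈ G, p C * σ C * sq2 (h C J))
            - p C' * σ C' * sq2 (h C' J)
            + p C' * σ C' * ((((τ:ℝ)/((n:ℝ)*p C'))^2)
                * sq2 (grad (fC C') x - grad (fC C') xs))) := by
      intro C' hC'
      have e1 : ∀ C ∈ G, p C * Ψ C (T C' (x, J))
          = p C * sq2 ((x - xs) - α • g C' (x, J))
            + p C * (2*σ C*α*sq2 (if C = C'
                then (1/((n:ℝ)*p C)) • ∑ i ∈ C, (grad (f i) x - grad (f i) xs)
                else h C J)) := by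
        intro C hC
        rw [hT, hΨ, hupd C' hC' C hC, sub_right_comm]
        ring
      rw [Finset.sum_congr rfl e1, Finset.sum_add_distrib, ← Finset.sum_mul, hp1, one_mul]
      congr 1
      rw [← Finset.sum_erase_add G _ hC']
      have e4 : ∑ C ∈ G, p C * σ C * sq2 (h C J)
          = ∑ C ∈ G.erase C', p C * σ C * sq2 (h C J) + p C' * σ C' * sq2 (h C' J) :=
        (Finset.sum_erase_add G _ hC').symm
      have e3 : ∑ C ∈ G.erase C', p C * (2*σ C*α*sq2 (if C = C'
              then (1/((n:ℝ)*p C)) • ∑ i ∈ C, (grad (f i) x - grad (f i) xs)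
              else h C J))
          = ∑ C ∈ G.erase C', 2*α*(p C * σ C * sq2 (h C J)) := by
        refine Finset.sum_congr rfl fun C hCe => ?_
        rw [if_neg (Finset.ne_of_mem_erase hCe)]
        ring
      rw [e3, if_pos rfl, hAD C' hC', sq2_smul, e4, ← Finset.mul_sum]
      ring
    have hE1 : ∑ C' ∈ G, p C' * (∑ C ∈ G, p C * Ψ C (T C' (x, J)))
        = (∑ C' ∈ G, p C' * sq2 ((x - xs) - α • g C' (x, J)))
          + (2*α*(∑ C ∈ G, p C * σ C * sq2 (h C J))
            + ∑ C' ∈ G, (2*α*((p C')^2*σ C'*((((τ:ℝ)/((n:ℝ)*p C'))^2)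
                  * sq2 (grad (fC C') x - grad (fC C') xs)))
              - 2*α*((p C')^2*σ C'*sq2 (h C' J)))) := by
      have e1 : ∀ C' ∈ G, p C' * (∑ C ∈ G, p C * Ψ C (T C' (x, J)))
          = p C' * sq2 ((x - xs) - α • g C' (x, J))
            + (2*α*(∑ C ∈ G, p C * σ C * sq2 (h C J)) * p C'
              + (2*α*((p C')^2*σ C'*((((τ:ℝ)/((n:ℝ)*p C'))^2)
                    * sq2 (grad (fC C') x - grad (fC C') xs)))
                - 2*α*((p C')^2*σ C'*sq2 (h C' J)))) := by
        intro C' hC'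
        rw [hΦT C' hC']
        ring
      rw [Finset.sum_congr rfl e1, Finset.sum_add_distrib, Finset.sum_add_distrib,
        ← Finset.mul_sum, hp1, mul_one]
    have hE2 : ∑ C' ∈ G, p C' * sq2 ((x - xs) - α • g C' (x, J))
        = sq2 (x - xs)
          - 2*α*(∑ C ∈ G, (p C * ((τ:ℝ)/((n:ℝ)*p C)))
              * inner2 (x - xs) (grad (fC C) x - grad (fC C) xs))
          + α^2 * (∑ C' ∈ G, p C' * sq2 (g C' (x, J))) := by
      have e1 : ∀ C' ∈ G, p C' * sq2 ((x - xs) - α • g C' (x, J))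
          = p C' * sq2 (x - xs) - 2*α*(p C' * inner2 (x - xs) (g C' (x, J)))
            + α^2*(p C' * sq2 (g C' (x, J))) := by
        intro C' _
        rw [sq2_sub_smul]
        ring
      rw [Finset.sum_congr rfl e1, Finset.sum_add_distrib, Finset.sum_sub_distrib,
        ← Finset.sum_mul, hp1, one_mul, ← Finset.mul_sum, ← Finset.mul_sum, hipsum]
    have hperC : ∀ C ∈ G,
        -(2*α*((p C * ((τ:ℝ)/((n:ℝ)*p C)))
            * inner2 (x - xs) (grad (fC C) x - grad (fC C) xs)))
          + α^2*(p C*(2*((((τ:ℝ)/((n:ℝ)*p C))^2) * sq2 (grad (fC C) x - grad (fC C) xs))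
              + 2*sq2 (h C J)))
          + (2*α*((p C)^2*σ C*((((τ:ℝ)/((n:ℝ)*p C))^2)
                * sq2 (grad (fC C) x - grad (fC C) xs)))
            - 2*α*((p C)^2*σ C*sq2 (h C J)))
          ≤ -(μ*α*((p C * ((τ:ℝ)/((n:ℝ)*p C))) * sq2 (x - xs)))
            - 2*μ*α^2*(p C*σ C*sq2 (h C J)) := by
      intro C hC
      have hLC := hL0 C hC
      have hpC := hp C hC
      have hML : (0:ℝ) < μ + L C := by linarith
      refine perC_key μ (L C) (p C) (σ C) ((τ:ℝ)/((n:ℝ)*p C)) (1/(μ + L C)) α (n:ℝ) (τ:ℝ)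
        (sq2 (x - xs)) (sq2 (grad (fC C) x - grad (fC C) xs)) (sq2 (h C J))
        (inner2 (x - xs) (grad (fC C) x - grad (fC C) xs))
        hμ (hL C hC) hpC hα0 hn' (hσpos C hC) (div_pos hτ' (mul_pos hn' hpC))
        ?_ ?_ ?_ (sq2_nonneg _) (sq2_nonneg _) (sq2_nonneg _) ?_ ?_
      · rw [hσ]
        field_simp
      · field_simp
      · field_simp
      · have h4L : (0:ℝ) < 4 * L C * (τ:ℝ) / (n:ℝ) :=
          div_pos (mul_pos (mul_pos (by norm_num) hLC) hτ') hn'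
        have hd : (0:ℝ) < μ + 4 * L C * (τ:ℝ) / (n:ℝ) := by linarith
        have h1 : α * (μ + 4 * L C * (τ:ℝ) / (n:ℝ)) ≤ p C := (le_div_iff₀ hd).mp (hα C hC)
        have h2 := mul_le_mul_of_nonneg_right h1 hn'.le
        have hXn : 4 * L C * (τ:ℝ) / (n:ℝ) * (n:ℝ) = 4 * L C * (τ:ℝ) :=
          div_mul_cancel₀ _ hn'.ne'
        calc α * ((n:ℝ)*μ + 4*L C*(τ:ℝ))
            = α * (μ*(n:ℝ) + 4 * L C * (τ:ℝ) / (n:ℝ) * (n:ℝ)) := by rw [hXn]; ring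
          _ = α * (μ + 4 * L C * (τ:ℝ) / (n:ℝ)) * (n:ℝ) := by ring
          _ ≤ p C * (n:ℝ) := h2
          _ = (n:ℝ) * p C := by ring
      · have h0 := hcoerce C hC x xs
        rw [inner2_comm] at h0
        have hdiv : μ * L C / (μ + L C) = μ * L C * (1 / (μ + L C)) := by ring
        rw [hdiv] at h0
        linarith [h0]
    have hΦxJ : ∑ C ∈ G, p C * Ψ C (x, J)
        = sq2 (x - xs) + 2*α*(∑ C ∈ G, p C * σ C * sq2 (h C J)) := by
      have e1 : ∀ C ∈ G, p C * Ψ C (x, J)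
          = p C * sq2 (x - xs) + 2*α*(p C * σ C * sq2 (h C J)) := by
        intro C _
        rw [hΨ]
        ring
      rw [Finset.sum_congr rfl e1, Finset.sum_add_distrib, ← Finset.sum_mul, hp1, one_mul,
        ← Finset.mul_sum]
    have hcomb : ∑ C ∈ G,
          (-(2*α*((p C * ((τ:ℝ)/((n:ℝ)*p C)))
              * inner2 (x - xs) (grad (fC C) x - grad (fC C) xs)))
            + α^2*(p C*(2*((((τ:ℝ)/((n:ℝ)*p C))^2) * sq2 (grad (fC C) x - grad (fC C) xs))
                + 2*sq2 (h C J)))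
            + (2*α*((p C)^2*σ C*((((τ:ℝ)/((n:ℝ)*p C))^2)
                  * sq2 (grad (fC C) x - grad (fC C) xs)))
              - 2*α*((p C)^2*σ C*sq2 (h C J))))
        = -(2*α*(∑ C ∈ G, (p C * ((τ:ℝ)/((n:ℝ)*p C)))
              * inner2 (x - xs) (grad (fC C) x - grad (fC C) xs)))
          + α^2*(∑ C ∈ G, p C*(2*((((τ:ℝ)/((n:ℝ)*p C))^2)
                * sq2 (grad (fC C) x - grad (fC C) xs)) + 2*sq2 (h C J)))
          + ∑ C ∈ G, (2*α*((p C)^2*σ C*((((τ:ℝ)/((n:ℝ)*p C))^2)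
                * sq2 (grad (fC C) x - grad (fC C) xs)))
              - 2*α*((p C)^2*σ C*sq2 (h C J))) := by
      rw [Finset.sum_add_distrib, Finset.sum_add_distrib, Finset.sum_neg_distrib,
        ← Finset.mul_sum, ← Finset.mul_sum]
    have hcombR : ∑ C ∈ G,
          (-(μ*α*((p C * ((τ:ℝ)/((n:ℝ)*p C))) * sq2 (x - xs)))
            - 2*μ*α^2*(p C*σ C*sq2 (h C J)))
        = -(μ*α*sq2 (x - xs)) - 2*μ*α^2*(∑ C ∈ G, p C*σ C*sq2 (h C J)) := by
      have e1 : ∀ C ∈ G,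
          -(μ*α*((p C * ((τ:ℝ)/((n:ℝ)*p C))) * sq2 (x - xs)))
            - 2*μ*α^2*(p C*σ C*sq2 (h C J))
          = -(μ*α*sq2 (x - xs)*(p C * ((τ:ℝ)/((n:ℝ)*p C))))
            - 2*μ*α^2*(p C*σ C*sq2 (h C J)) := by
        intro C _
        ring
      rw [Finset.sum_congr rfl e1, Finset.sum_sub_distrib, Finset.sum_neg_distrib,
        ← Finset.mul_sum, hpc1, mul_one, ← Finset.mul_sum]
    have hsum := Finset.sum_le_sum hperC
    have hmul := mul_le_mul_of_nonneg_left hSg (sq_nonneg α)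
    rw [hE1, hE2, hΦxJ]
    rw [hcomb] at hsum
    rw [hcombR] at hsum
    have hKK : ∑ C ∈ G, p C * σ C * sq2 (h C J) = ∑ C ∈ G, p C*σ C*sq2 (h C J) := rfl
    nlinarith [hsum, hmul]
  -- step size keeps the contraction factor in [0,1]
  have hμα : μ * α ≤ 1 := by
    obtain ⟨C₀, ⟨hC₀, _⟩, _⟩ := hpart ⟨0, hn⟩
    have hLC := hL0 C₀ hC₀
    have hX : (0:ℝ) ≤ 4 * L C₀ * (τ:ℝ) / (n:ℝ) :=
      (div_pos (mul_pos (mul_pos (by norm_num) hLC) hτ') hn').le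
    have hd : (0:ℝ) < μ + 4 * L C₀ * (τ:ℝ) / (n:ℝ) := by linarith
    have h1 : α * (μ + 4 * L C₀ * (τ:ℝ) / (n:ℝ)) ≤ p C₀ := (le_div_iff₀ hd).mp (hα C₀ hC₀)
    have hp1' : p C₀ ≤ 1 := by
      rw [← hp1]
      exact Finset.single_le_sum (fun C hC => (hp C hC).le) hC₀
    nlinarith [mul_nonneg hα0.le hX]
  have h1μα : (0:ℝ) ≤ 1 - μ * α := by linarith
  have main : ∀ (k : ℕ) (s : (Fin d → ℝ) × Matrix (Fin d) (Fin n) ℝ),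
      ∑ cs : Fin k → {C // C ∈ G}, (∏ t, p ((cs t) : Finset (Fin n))) *
          (∑ C ∈ G, p C * Ψ C ((List.ofFn cs).foldl (fun s C' => T (C' : Finset (Fin n)) s) s))
        ≤ (1 - μ * α) ^ k * ∑ C ∈ G, p C * Ψ C s := by
    intro k
    induction k with
    | zero =>
      intro s
      simp
    | succ k ih =>
      intro s
      rw [← Equiv.sum_comp (Fin.consEquiv fun _ : Fin (k+1) => {C // C ∈ G}), Fintype.sum_prod_type]
      have e1 : ∀ (b : {C // C ∈ G}) (rest : Fin k → {C // C ∈ G}),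
          (∏ t, p ((((Fin.consEquiv fun _ : Fin (k+1) => {C // C ∈ G}) (b, rest)) t : Finset (Fin n)))) *
            (∑ C ∈ G, p C * Ψ C ((List.ofFn ((Fin.consEquiv fun _ : Fin (k+1) => {C // C ∈ G}) (b, rest))).foldl
              (fun s C' => T (C' : Finset (Fin n)) s) s))
          = p (b : Finset (Fin n)) * ((∏ t, p ((rest t : Finset (Fin n)))) *
            (∑ C ∈ G, p C * Ψ C ((List.ofFn rest).foldl
              (fun s C' => T (C' : Finset (Fin n)) s) (T (b : Finset (Fin n)) s)))) := by
        intro b rest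
        have hfn : (Fin.consEquiv fun _ : Fin (k+1) => {C // C ∈ G}) (b, rest) = Fin.cons b rest := rfl
        rw [hfn, List.ofFn_succ, Fin.prod_univ_succ]
        simp only [Fin.cons_zero, Fin.cons_succ]
        simp
        try ring
      calc ∑ b : {C // C ∈ G}, ∑ rest : Fin k → {C // C ∈ G},
            (∏ t, p ((((Fin.consEquiv fun _ : Fin (k+1) => {C // C ∈ G}) (b, rest)) t : Finset (Fin n)))) *
              (∑ C ∈ G, p C * Ψ C ((List.ofFn ((Fin.consEquiv fun _ : Fin (k+1) => {C // C ∈ G}) (b, rest))).foldl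
                (fun s C' => T (C' : Finset (Fin n)) s) s))
          = ∑ b : {C // C ∈ G}, p (b : Finset (Fin n)) *
              (∑ rest : Fin k → {C // C ∈ G}, (∏ t, p ((rest t : Finset (Fin n)))) *
                (∑ C ∈ G, p C * Ψ C ((List.ofFn rest).foldl
                  (fun s C' => T (C' : Finset (Fin n)) s) (T (b : Finset (Fin n)) s)))) := by
            refine Finset.sum_congr rfl fun b _ => ?_
            rw [Finset.sum_congr rfl fun rest _ => e1 b rest, Finset.mul_sum]
        _ ≤ ∑ b : {C // C ∈ G}, p (b : Finset (Fin n)) *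
              ((1 - μ * α) ^ k * ∑ C ∈ G, p C * Ψ C (T (b : Finset (Fin n)) s)) := by
            refine Finset.sum_le_sum fun b _ => ?_
            exact mul_le_mul_of_nonneg_left (ih (T (b : Finset (Fin n)) s)) (hp _ b.2).le
        _ = (1 - μ * α) ^ k * ∑ b : {C // C ∈ G}, p (b : Finset (Fin n)) *
              (∑ C ∈ G, p C * Ψ C (T (b : Finset (Fin n)) s)) := by
            rw [Finset.mul_sum]
            exact Finset.sum_congr rfl fun b _ => by ring
        _ ≤ (1 - μ * α) ^ k * ((1 - μ * α) * ∑ C ∈ G, p C * Ψ C s) := by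
            refine mul_le_mul_of_nonneg_left ?_ (pow_nonneg h1μα k)
            have hcoe : ∑ b : {C // C ∈ G}, p (b : Finset (Fin n)) *
                (∑ C ∈ G, p C * Ψ C (T (b : Finset (Fin n)) s))
                = ∑ C' ∈ G, p C' * (∑ C ∈ G, p C * Ψ C (T C' s)) :=
              Finset.sum_coe_sort G (fun C' => p C' * (∑ C ∈ G, p C * Ψ C (T C' s)))
            rw [hcoe]
            exact step s
        _ = (1 - μ * α) ^ (k + 1) * ∑ C ∈ G, p C * Ψ C s := by ring
  exact fun k => main k (x0, J0)
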